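/- There exists a constant K > 0 such that for every integer ℓ ≥ 1, every integer N ≥ 1, and every binary tree structure T with N internal nodes, the VC dimension of the class of decision trees on ℝ^ℓ with structure T and leaf labels in {true, false} is at most K · N · (1 + log(N · ℓ)). -/

import Mathlib

/-!
On a sample of `m` points, a decision tree of structure `T` is determined by the traces of
its `N` node rules and the `N + 1` labels of its leaves. For a fixed feature `i`, the traces
of the thresholds `x ↦ [θ < x^i]` form a chain, so there are at most `m + 1` of them, and a
rule `(i, θ, s)` has at most `2ℓ(m + 1)` traces. A shattered sample therefore satisfies
`2 ^ m ≤ (2ℓ(m + 1)) ^ N · 2 ^ (N + 1)`, and taking logarithms gives `m = O(N (1 + log (Nℓ)))`.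
-/

/-- A `c`-partition of a finite set `S`: a set of `c` pairwise disjoint nonempty
subsets (parts) whose union is `S`. -/
def IsPartition {α : Type*} (S : Finset α) (c : ℕ) (P : Finset (Finset α)) : Prop :=
  P.card = c ∧ (∀ p ∈ P, p.Nonempty) ∧
    (∀ p ∈ P, ∀ q ∈ P, p ≠ q → Disjoint p q) ∧ (∀ x, x ∈ S ↔ ∃ p ∈ P, x ∈ p)

/-- A binary tree structure: either a leaf, or an internal node with a left and a
right subtree structure. -/
inductive TreeStruct : Type where
  | leaf : TreeStruct
  | node : TreeStruct → TreeStruct → TreeStruct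
deriving DecidableEq

namespace TreeStruct

/-- The number of leaves of a binary tree structure. -/
def leaves : TreeStruct → ℕ
  | leaf => 1
  | node l r => l.leaves + r.leaves

/-- The number of internal nodes of a binary tree structure. -/
def internals : TreeStruct → ℕ
  | leaf => 0
  | node l r => l.internals + r.internals + 1

end TreeStruct

/-- A decision tree on `ℝ^ℓ` with labels in `Y`: every leaf carries a label and every
internal node carries a decision rule `(i, θ, s)` with feature `i`, threshold `θ` and
sign `s` (`true` codes `+1`, `false` codes `-1`). -/
inductive DTree (ℓ : ℕ) (Y : Type) : Type where
  | leaf : Y → DTree ℓ Y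
  | node : Fin ℓ → ℝ → Bool → DTree ℓ Y → DTree ℓ Y → DTree ℓ Y

namespace DTree

/-- The output of a decision tree on an example `x`: at a node with rule `(i, θ, s)`,
`x` is sent to the left subtree if `sign (x^i - θ) = s` (i.e. `(θ < x^i) = s`) and to
the right subtree otherwise. -/
noncomputable def eval {ℓ : ℕ} {Y : Type} : DTree ℓ Y → (Fin ℓ → ℝ) → Y
  | leaf y, _ => y
  | node i θ s l r, x => if decide (θ < x i) = s then l.eval x else r.eval x

/-- The underlying structure of a decision tree. -/
def shape {ℓ : ℕ} {Y : Type} : DTree ℓ Y → TreeStruct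
  | leaf _ => .leaf
  | node _ _ _ l r => .node l.shape r.shape

end DTree

/-- A partition `P` of a sample `S ⊆ ℝ^ℓ` is realizable by the class of decision trees
with structure `T` if there is a decision tree `t` with structure `T` (labels in `ℕ`)
such that two points of `S` lie in the same part of `P` iff `t` outputs the same label
on them. -/
def TreeRealizable (ℓ : ℕ) (T : TreeStruct) (S : Finset (Fin ℓ → ℝ))
    (P : Finset (Finset (Fin ℓ → ℝ))) : Prop :=
  ∃ t : DTree ℓ ℕ, t.shape = T ∧
    ∀ x ∈ S, ∀ y ∈ S, ((∃ p ∈ P, x ∈ p ∧ y ∈ p) ↔ t.eval x = t.eval y)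

/-- `PartSet ℓ T a S` : the set of `a`-partitions of `S` realizable by the tree class `T`. -/
def PartSet (ℓ : ℕ) (T : TreeStruct) (a : ℕ) (S : Finset (Fin ℓ → ℝ)) :
    Set (Finset (Finset (Fin ℓ → ℝ))) :=
  {P | IsPartition S a P ∧ TreeRealizable ℓ T S P}

/-- The `a`-partitioning function of the tree class `T` on `ℝ^ℓ`: the largest number of
distinct `a`-partitions realizable by `T` on a sample of `m` points. -/
noncomputable def treePi (ℓ : ℕ) (T : TreeStruct) (a m : ℕ) : ℕ :=
  sSup {n : ℕ | ∃ S : Finset (Fin ℓ → ℝ), S.card = m ∧ n = (PartSet ℓ T a S).ncard}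

/-- The class of Boolean-labeled decision trees with structure `T` on `ℝ^ℓ`. -/
noncomputable def TreeClassB (ℓ : ℕ) (T : TreeStruct) : Set ((Fin ℓ → ℝ) → Bool) :=
  {h | ∃ t : DTree ℓ Bool, t.shape = T ∧ h = t.eval}

/-- `H` shatters the finite set `S` if every Boolean function on `S` is the
restriction to `S` of some `h ∈ H`. -/
def Shatters {α : Type*} (H : Set (α → Bool)) (S : Finset α) : Prop :=
  ∀ f : α → Bool, ∃ h ∈ H, ∀ x ∈ S, h x = f x

open Set

theorem TreeStruct.leaves_eq_internals_add_one (T : TreeStruct) : T.leaves = T.internals + 1 := by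
  induction T with
  | leaf => rfl
  | node l r hl hr => simp only [TreeStruct.leaves, TreeStruct.internals, hl, hr]; omega

section Traces

variable {α : Type*}

theorem ncard_range_threshold_le [Fintype α] (f : α → ℝ) :
    (range fun θ : ℝ => fun a => decide (θ < f a)).ncard ≤ Fintype.card α + 1 := by
  classical
  set thr : ℝ → α → Bool := fun θ a => decide (θ < f a)
  set accepted : (α → Bool) → ℕ := fun g => (Finset.univ.filter fun a => g a = true).card
  have eq_of_accepted_eq {θ₁ θ₂ : ℝ} (hθ : θ₁ ≤ θ₂)
      (hc : accepted (thr θ₁) = accepted (thr θ₂)) : thr θ₁ = thr θ₂ := by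
    have hsub : Finset.univ.filter (fun a => thr θ₂ a = true) ⊆
        Finset.univ.filter fun a => thr θ₁ a = true := by
      intro a
      simp only [Finset.mem_filter, Finset.mem_univ, true_and, thr, decide_eq_true_eq]
      exact hθ.trans_lt
    have heq := Finset.eq_of_subset_of_card_le hsub hc.le
    funext a
    simpa using (Finset.ext_iff.mp heq a).symm
  have hinj : InjOn accepted (range thr) := by
    rintro _ ⟨θ₁, rfl⟩ _ ⟨θ₂, rfl⟩ hc
    rcases le_total θ₁ θ₂ with hθ | hθ
    · exact eq_of_accepted_eq hθ hc
    · exact (eq_of_accepted_eq hθ hc.symm).symm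
  have hmaps : MapsTo accepted (range thr) (Finset.Iic (Fintype.card α) : Set ℕ) :=
    fun g _ => by simpa [accepted] using (Finset.card_filter_le _ _).trans_eq Finset.card_univ
  calc (range thr).ncard ≤ (Finset.Iic (Fintype.card α) : Set ℕ).ncard :=
        ncard_le_ncard_of_injOn accepted hmaps hinj (Finset.finite_toSet _)
    _ = Fintype.card α + 1 := by rw [ncard_coe_finset, Nat.card_Iic]

def ruleTraces {ι : Type*} (x : α → ι → ℝ) : Set (α → Bool) :=
  {g | ∃ i θ s, g = fun a => decide (θ < x a i) == s}

theorem ncard_ruleTraces_le [Fintype α] {ι : Type*} [Fintype ι] (x : α → ι → ℝ) :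
    (ruleTraces x).ncard ≤ 2 * Fintype.card ι * (Fintype.card α + 1) := by
  have hsub : ruleTraces x ⊆ ⋃ p : ι × Bool,
      (fun g a => g a == p.2) '' range fun θ : ℝ => fun a => decide (θ < x a p.1) := by
    rintro _ ⟨i, θ, s, rfl⟩
    exact mem_iUnion.mpr ⟨(i, s), _, ⟨θ, rfl⟩, rfl⟩
  calc (ruleTraces x).ncard
      ≤ ∑ p : ι × Bool, ((fun g a => g a == p.2) ''
          range fun θ : ℝ => fun a => decide (θ < x a p.1)).ncard :=
        (ncard_le_ncard hsub (toFinite _)).trans (ncard_iUnion_le_of_fintype _)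
    _ ≤ ∑ _p : ι × Bool, (Fintype.card α + 1) := Finset.sum_le_sum fun p _ =>
        (ncard_image_le (toFinite _)).trans (ncard_range_threshold_le _)
    _ = 2 * Fintype.card ι * (Fintype.card α + 1) := by
        simp only [Finset.sum_const, Finset.card_univ, Fintype.card_prod, Fintype.card_bool,
          smul_eq_mul]
        ring

variable {ℓ : ℕ} (Y : Type) (x : α → Fin ℓ → ℝ)

def shapeTraces (T : TreeStruct) : Set (α → Y) :=
  {g | ∃ t : DTree ℓ Y, t.shape = T ∧ g = fun a => t.eval (x a)}

theorem shapeTraces_leaf : shapeTraces Y x .leaf = range fun y _ => y := by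
  ext g
  constructor
  · rintro ⟨_ | _, ht, rfl⟩
    · exact ⟨_, rfl⟩
    · cases ht
  · rintro ⟨y, rfl⟩
    exact ⟨.leaf y, rfl, rfl⟩

theorem shapeTraces_node_subset (Tl Tr : TreeStruct) :
    shapeTraces Y x (.node Tl Tr) ⊆ (fun p : (α → Bool) × (α → Y) × (α → Y) =>
      fun a => if p.1 a then p.2.1 a else p.2.2 a) ''
        (ruleTraces x ×ˢ shapeTraces Y x Tl ×ˢ shapeTraces Y x Tr) := by
  rintro _ ⟨_ | ⟨i, θ, s, tl, tr⟩, ht, rfl⟩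
  · cases ht
  · cases ht
    refine ⟨(_, _, _), ⟨⟨i, θ, s, rfl⟩, ⟨tl, rfl, rfl⟩, ⟨tr, rfl, rfl⟩⟩, ?_⟩
    funext a
    simp only [DTree.eval, beq_iff_eq]

theorem ncard_shapeTraces_le [Fintype α] [Fintype Y] (T : TreeStruct) :
    (shapeTraces Y x T).ncard ≤
      (2 * ℓ * (Fintype.card α + 1)) ^ T.internals * Fintype.card Y ^ T.leaves := by
  induction T with
  | leaf =>
    rw [shapeTraces_leaf, ← image_univ]
    simpa [TreeStruct.internals, TreeStruct.leaves] using
      ncard_image_le (f := fun (y : Y) (_ : α) => y) (toFinite univ)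
  | node Tl Tr ihl ihr =>
    calc (shapeTraces Y x (.node Tl Tr)).ncard
        ≤ (ruleTraces x ×ˢ shapeTraces Y x Tl ×ˢ shapeTraces Y x Tr).ncard :=
          (ncard_le_ncard (shapeTraces_node_subset Y x Tl Tr) (toFinite _)).trans
            (ncard_image_le (toFinite _))
      _ = (ruleTraces x).ncard * ((shapeTraces Y x Tl).ncard * (shapeTraces Y x Tr).ncard) := by
          rw [ncard_prod, ncard_prod]
      _ ≤ (2 * ℓ * (Fintype.card α + 1)) *
            (((2 * ℓ * (Fintype.card α + 1)) ^ Tl.internals * Fintype.card Y ^ Tl.leaves) *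
             ((2 * ℓ * (Fintype.card α + 1)) ^ Tr.internals * Fintype.card Y ^ Tr.leaves)) := by
          gcongr
          simpa using ncard_ruleTraces_le x
      _ = _ := by
          simp only [TreeStruct.internals, TreeStruct.leaves]
          ring

end Traces

theorem shapeTraces_eq_univ_of_shatters {ℓ : ℕ} {T : TreeStruct} {S : Finset (Fin ℓ → ℝ)}
    (h : Shatters (TreeClassB ℓ T) S) :
    shapeTraces Bool (Subtype.val : S → Fin ℓ → ℝ) T = univ := by
  classical
  refine eq_univ_of_forall fun f => ?_
  obtain ⟨_, ⟨t, hts, rfl⟩, hagree⟩ := h fun x => if hx : x ∈ S then f ⟨x, hx⟩ else false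
  exact ⟨t, hts, funext fun x => by simpa using (hagree x.1 x.2).symm⟩

theorem two_pow_card_le_of_shatters {ℓ : ℕ} {T : TreeStruct} {S : Finset (Fin ℓ → ℝ)}
    (h : Shatters (TreeClassB ℓ T) S) :
    2 ^ S.card ≤ (2 * ℓ * (S.card + 1)) ^ T.internals * 2 ^ (T.internals + 1) := by
  have hcard := ncard_shapeTraces_le Bool (Subtype.val : S → Fin ℓ → ℝ) T
  rwa [shapeTraces_eq_univ_of_shatters h, ncard_univ, Nat.card_fun, Nat.card_eq_fintype_card,
    Nat.card_eq_fintype_card, Fintype.card_coe, Fintype.card_bool,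
    TreeStruct.leaves_eq_internals_add_one] at hcard

section

open Real

theorem log_le_div_add_log {y c : ℝ} (hy : 0 < y) (hc : 0 < c) : log y ≤ y / c + log c := by
  have hyc : log (y / c) ≤ y / c - 1 := log_le_sub_one_of_pos (div_pos hy hc)
  rw [log_div hy.ne' hc.ne'] at hyc
  linarith

/-- After taking logarithms, `log (m + 1) ≤ (m + 1) / (4N) + log (4N)` absorbs the `m` on
the right into `m / 4 < m log 2`. -/
theorem le_mul_one_add_log_of_two_pow_le {m N ℓ : ℕ} (hN : 1 ≤ N) (hℓ : 1 ≤ ℓ)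
    (h : 2 ^ m ≤ (2 * ℓ * (m + 1)) ^ N * 2 ^ (N + 1)) :
    (m : ℝ) ≤ 9 * N * (1 + log (N * ℓ)) := by
  have hN' : (1 : ℝ) ≤ N := by exact_mod_cast hN
  have hℓ' : (1 : ℝ) ≤ ℓ := by exact_mod_cast hℓ
  have hlog : m * log 2 ≤ N * (log 2 + log ℓ + log (m + 1)) + (N + 1) * log 2 := by
    have hR : (2 : ℝ) ^ m ≤ (2 * ℓ * (m + 1)) ^ N * 2 ^ (N + 1) := by exact_mod_cast h
    have := log_le_log (by positivity) hR
    rw [log_mul (by positivity) (by positivity), log_pow, log_pow, log_pow,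
      log_mul (by positivity) (by positivity), log_mul (by positivity) (by positivity)] at this
    exact_mod_cast this
  have hlog_succ : N * log (m + 1) ≤ (m + 1) / 4 + N * (2 * log 2 + log N) := by
    have h4N : log (4 * N) = 2 * log 2 + log N := by
      rw [log_mul (by norm_num) (by positivity), show (4 : ℝ) = 2 ^ 2 by norm_num, log_pow]
      norm_num
    have := log_le_div_add_log (y := m + 1) (by positivity) (by positivity : (0 : ℝ) < 4 * N)
    rw [h4N] at this
    calc N * log (m + 1) ≤ N * ((m + 1) / (4 * N) + (2 * log 2 + log N)) := by gcongr
      _ = (m + 1) / 4 + N * (2 * log 2 + log N) := by field_simp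
  have hlog_prod : log (N * ℓ) = log N + log ℓ := log_mul (by positivity) (by positivity)
  have hNL : N * log 2 ≤ N * 0.7 := by gcongr; linarith [log_two_lt_d9]
  have hmL : m * 0.69 ≤ m * log 2 := by gcongr; linarith [log_two_gt_d9]
  have hNlogN : 0 ≤ N * log N := mul_nonneg (by positivity) (log_nonneg hN')
  have hNlogℓ : 0 ≤ N * log ℓ := mul_nonneg (by positivity) (log_nonneg hℓ')
  rw [hlog_prod]
  linarith [log_two_lt_d9]

end

theorem vcdim_tree_asymptotic :
    ∃ K : ℝ, 0 < K ∧ ∀ (ℓ N : ℕ), 1 ≤ ℓ → 1 ≤ N → ∀ T : TreeStruct,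
      T.internals = N → ∀ S : Finset (Fin ℓ → ℝ), Shatters (TreeClassB ℓ T) S →
        (S.card : ℝ) ≤ K * N * (1 + Real.log (N * ℓ)) := by
  refine ⟨9, by norm_num, fun ℓ N hℓ hN T hT S hS => ?_⟩
  subst hT
  exact le_mul_one_add_log_of_two_pow_le hN hℓ (two_pow_card_le_of_shatters hS)
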